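/- (Randomized rounding of phases.) Let θ ∈ ℝ and let b be an integer with b ≥ 1. Then the randomized b-bit rounding Θ^{(b)} of θ is unbiased, E[Θ^{(b)}] = (1 − r(θ,b))·φ₀(θ,b) + r(θ,b)·(φ₀(θ,b) + 2^{−b}) = θ, and its expected phase satisfies |e^{2πiθ} − E[e^{2πiΘ^{(b)}}]| ≤ 1 − cos(π·2^{−b}) ≤ π²·2^{−(2b+1)}. Consequently, for any ε with 0 < ε ≤ π²/8, choosing b = ⌈(1/2)·log₂(π²/(2ε))⌉ gives |e^{2πiθ} − E[e^{2πiΘ^{(b)}}]| ≤ ε. -/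

import Mathlib

open Real

/-- The `b`-bit truncation `φ₀(θ,b) = 2^{−b}·⌊2^b·θ⌋`. -/
noncomputable def phi0 (θ : ℝ) (b : ℕ) : ℝ :=
  (2 : ℝ) ^ (-(b : ℤ)) * (⌊(2 : ℝ) ^ b * θ⌋ : ℝ)

/-- The fractional remainder `r(θ,b) = 2^b·θ − ⌊2^b·θ⌋ ∈ [0,1)`. -/
noncomputable def rfrac (θ : ℝ) (b : ℕ) : ℝ :=
  (2 : ℝ) ^ b * θ - (⌊(2 : ℝ) ^ b * θ⌋ : ℝ)

/-- The complex phase `e^{2πiθ}`. -/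
noncomputable def phase (θ : ℝ) : ℂ :=
  Complex.exp (2 * Real.pi * Complex.I * (θ : ℂ))

/-- The expected phase `E[e^{2πiΘ^{(b)}}]` of the randomized `b`-bit rounding
`Θ^{(b)}` of `θ`, which takes the value `φ₀(θ,b)` with probability `1 − r(θ,b)`
and the value `φ₀(θ,b) + 2^{−b}` with probability `r(θ,b)`. -/
noncomputable def expPhase (θ : ℝ) (b : ℕ) : ℂ :=
  ((1 - rfrac θ b : ℝ) : ℂ) * phase (phi0 θ b) +
    ((rfrac θ b : ℝ) : ℂ) * phase (phi0 θ b + (2 : ℝ) ^ (-(b : ℤ)))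

/-!
Write `θ = φ₀ + r δ` with `δ = 2^{-b}`. The error `e^{2πiθ} - E[e^{2πiΘ}]` is then
`e^{2πiφ₀}` times the distance from the arc point `e^{2πirδ}` to the chord point
`(1 - r) + r e^{2πiδ}`. Rotating by `e^{-πiδ}` makes the chord vertical: with `β = πδ ≤ π/2`
and `t = 2r - 1`, the two points become `e^{itβ}` and `cos β + i t sin β`. The horizontal gap
`cos (tβ) - cos β` is at most `cos (tβ) (1 - cos β)`, and, by concavity of `sin` and
`β cos β ≤ sin β`, the vertical gap `sin (tβ) - t sin β` is between `0` and
`sin (tβ) (1 - cos β)`. Since `cos² + sin² = 1`, the distance is at most `1 - cos β`, and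
`1 - cos β ≤ β² / 2`.
-/

namespace Real

lemma mul_cos_le_sin {x : ℝ} (hx₀ : 0 ≤ x) (hx : x ≤ π / 2) : x * cos x ≤ sin x := by
  rcases hx.lt_or_eq with hx | rfl
  · have hcos : 0 < cos x := cos_pos_of_mem_Ioo ⟨by linarith [pi_pos], hx⟩
    have := le_tan hx₀ hx
    rwa [tan_eq_sin_div_cos, le_div_iff₀ hcos] at this
  · simp

lemma mul_sin_le_sin_mul {x t : ℝ} (hx₀ : 0 ≤ x) (hx : x ≤ π) (ht₀ : 0 ≤ t) (ht₁ : t ≤ 1) :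
    t * sin x ≤ sin (t * x) := by
  simpa using strictConcaveOn_sin_Icc.concaveOn.2 ⟨hx₀, hx⟩ ⟨le_rfl, pi_pos.le⟩ ht₀
    (sub_nonneg.2 ht₁) (add_sub_cancel t 1)

lemma sq_cos_mul_sub_add_sq_sin_mul_sub_le_of_nonneg {β t : ℝ} (hβ₀ : 0 ≤ β) (hβ : β ≤ π / 2)
    (ht₀ : 0 ≤ t) (ht₁ : t ≤ 1) :
    (cos (t * β) - cos β) ^ 2 + (sin (t * β) - t * sin β) ^ 2 ≤ (1 - cos β) ^ 2 := by
  have hu₀ : 0 ≤ t * β := mul_nonneg ht₀ hβ₀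
  have huβ : t * β ≤ β := mul_le_of_le_one_left hβ₀ ht₁
  have hcos₀ : 0 ≤ cos β := cos_nonneg_of_mem_Icc ⟨by linarith [pi_pos], hβ⟩
  have hcos_le : cos β ≤ cos (t * β) := cos_le_cos_of_nonneg_of_le_pi hu₀ (by linarith) huβ
  have hgap₀ : 0 ≤ sin (t * β) - t * sin β :=
    sub_nonneg.2 (mul_sin_le_sin_mul hβ₀ (by linarith) ht₀ ht₁)
  have hgap : sin (t * β) - t * sin β ≤ sin (t * β) * (1 - cos β) := by
    have := mul_le_mul_of_nonneg_right (sin_le hu₀) hcos₀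
    nlinarith [mul_cos_le_sin hβ₀ hβ]
  have hsin : (sin (t * β) - t * sin β) ^ 2 ≤ (sin (t * β) * (1 - cos β)) ^ 2 :=
    pow_le_pow_left₀ hgap₀ hgap 2
  have hcos : (cos (t * β) - cos β) ^ 2 ≤ (cos (t * β) * (1 - cos β)) ^ 2 :=
    pow_le_pow_left₀ (sub_nonneg.2 hcos_le) (by nlinarith [cos_le_one (t * β)]) 2
  nlinarith [sin_sq_add_cos_sq (t * β)]

lemma sq_cos_mul_sub_add_sq_sin_mul_sub_le {β t : ℝ} (hβ₀ : 0 ≤ β) (hβ : β ≤ π / 2)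
    (ht : |t| ≤ 1) :
    (cos (t * β) - cos β) ^ 2 + (sin (t * β) - t * sin β) ^ 2 ≤ (1 - cos β) ^ 2 := by
  rcases le_total 0 t with ht₀ | ht₀
  · exact sq_cos_mul_sub_add_sq_sin_mul_sub_le_of_nonneg hβ₀ hβ ht₀ (le_of_abs_le ht)
  · have := sq_cos_mul_sub_add_sq_sin_mul_sub_le_of_nonneg hβ₀ hβ (neg_nonneg.2 ht₀)
      (neg_le.2 (neg_le_of_abs_le ht))
    simp only [neg_mul, cos_neg, sin_neg] at this
    linarith [neg_sq (sin (t * β) - t * sin β)]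

end Real

lemma phase_add (x y : ℝ) : phase (x + y) = phase x * phase y := by
  rw [phase, phase, phase, ← Complex.exp_add]
  push_cast
  ring_nf

lemma phase_eq_exp (x : ℝ) : phase x = Complex.exp (↑(2 * π * x) * Complex.I) := by
  rw [phase]
  push_cast
  ring_nf

lemma norm_phase (x : ℝ) : ‖phase x‖ = 1 := by
  rw [phase_eq_exp, Complex.norm_exp_ofReal_mul_I]

open Complex in
lemma norm_exp_mul_I_sub_chord_le {β t : ℝ} (hβ₀ : 0 ≤ β) (hβ : β ≤ π / 2) (ht : |t| ≤ 1) :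
    ‖exp (↑(t * β) * I) - (↑(Real.cos β) + ↑(t * Real.sin β) * I)‖ ≤ 1 - Real.cos β := by
  rw [exp_ofReal_mul_I, show ∀ a b c d : ℂ, a + b * I - (c + d * I) = (a - c) + (b - d) * I by
    intros; ring, ← ofReal_sub, ← ofReal_sub, norm_add_mul_I,
    Real.sqrt_le_left (sub_nonneg.2 (Real.cos_le_one β))]
  exact Real.sq_cos_mul_sub_add_sq_sin_mul_sub_le hβ₀ hβ ht

open Complex in
lemma phase_neg_half_mul_sub_chord {δ r : ℝ} :
    phase (-(δ / 2)) * (phase (r * δ) - (((1 - r : ℝ) : ℂ) + (r : ℂ) * phase δ)) =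
      exp (↑((2 * r - 1) * (π * δ)) * I) -
        (↑(Real.cos (π * δ)) + ↑((2 * r - 1) * Real.sin (π * δ)) * I) := by
  have h₁ : phase (-(δ / 2)) * phase (r * δ) = exp (↑((2 * r - 1) * (π * δ)) * I) := by
    rw [← phase_add, phase_eq_exp]
    ring_nf
  have h₂ : phase (-(δ / 2)) = ↑(Real.cos (π * δ)) - ↑(Real.sin (π * δ)) * I := by
    rw [phase_eq_exp, exp_ofReal_mul_I, show 2 * π * -(δ / 2) = -(π * δ) by ring,
      Real.cos_neg, Real.sin_neg, ofReal_neg, neg_mul, ← sub_eq_add_neg]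
  have h₃ : phase (-(δ / 2)) * phase δ = ↑(Real.cos (π * δ)) + ↑(Real.sin (π * δ)) * I := by
    rw [← phase_add, phase_eq_exp, exp_ofReal_mul_I]
    ring_nf
  push_cast at h₁ h₂ h₃ ⊢
  linear_combination h₁ - (1 - r : ℂ) * h₂ - (r : ℂ) * h₃

lemma norm_phase_mul_sub_chord_le {δ r : ℝ} (hδ₀ : 0 ≤ δ) (hδ : δ ≤ 1 / 2) (hr₀ : 0 ≤ r)
    (hr₁ : r ≤ 1) :
    ‖phase (r * δ) - (((1 - r : ℝ) : ℂ) + (r : ℂ) * phase δ)‖ ≤ 1 - cos (π * δ) := by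
  have := norm_exp_mul_I_sub_chord_le (β := π * δ) (t := 2 * r - 1) (by positivity)
    (by nlinarith [pi_pos]) (abs_le.2 ⟨by linarith, by linarith⟩)
  rwa [← phase_neg_half_mul_sub_chord, norm_mul, norm_phase, one_mul] at this

lemma phi0_add_rfrac_mul (θ : ℝ) (b : ℕ) : phi0 θ b + rfrac θ b * (2 : ℝ) ^ (-(b : ℤ)) = θ := by
  rw [phi0, rfrac, zpow_neg, zpow_natCast]
  field_simp
  ring

lemma phase_sub_expPhase (θ : ℝ) (b : ℕ) :
    phase θ - expPhase θ b = phase (phi0 θ b) *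
      (phase (rfrac θ b * (2 : ℝ) ^ (-(b : ℤ))) -
        (((1 - rfrac θ b : ℝ) : ℂ) + (rfrac θ b : ℂ) * phase ((2 : ℝ) ^ (-(b : ℤ))))) := by
  rw [← congrArg phase (phi0_add_rfrac_mul θ b), expPhase, phase_add, phase_add]
  ring

lemma norm_phase_sub_expPhase_le (θ : ℝ) {b : ℕ} (hb : 1 ≤ b) :
    ‖phase θ - expPhase θ b‖ ≤ 1 - cos (π * (2 : ℝ) ^ (-(b : ℤ))) := by
  rw [phase_sub_expPhase, norm_mul, norm_phase, one_mul]
  refine norm_phase_mul_sub_chord_le (by positivity) ?_ (Int.fract_nonneg _)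
    (Int.fract_lt_one _).le
  simpa using zpow_le_zpow_right₀ (by norm_num : (1 : ℝ) ≤ 2) (by omega : -(b : ℤ) ≤ -1)

lemma zpow_neg_two_mul_add_one (b : ℕ) :
    (2 : ℝ) ^ (-(2 * (b : ℤ) + 1)) = ((2 : ℝ) ^ (-(b : ℤ))) ^ 2 / 2 := by
  rw [← zpow_natCast, ← zpow_mul, div_eq_mul_inv, ← zpow_neg_one, ← zpow_add₀ two_ne_zero]
  congr 1
  push_cast
  ring

lemma one_sub_cos_pi_mul_zpow_le (b : ℕ) :
    1 - cos (π * (2 : ℝ) ^ (-(b : ℤ))) ≤ π ^ 2 * (2 : ℝ) ^ (-(2 * (b : ℤ) + 1)) := by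
  have := one_sub_sq_div_two_le_cos (x := π * (2 : ℝ) ^ (-(b : ℤ)))
  rw [zpow_neg_two_mul_add_one]
  linarith [mul_pow π ((2 : ℝ) ^ (-(b : ℤ))) 2]

lemma pi_sq_mul_zpow_le_of_logb_le {ε : ℝ} (hε : 0 < ε) {b : ℕ}
    (hb : (1 / 2 : ℝ) * logb 2 (π ^ 2 / (2 * ε)) ≤ b) :
    π ^ 2 * (2 : ℝ) ^ (-(2 * (b : ℤ) + 1)) ≤ ε := by
  have h : π ^ 2 / (2 * ε) ≤ ((2 : ℝ) ^ b) ^ 2 := by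
    rw [← pow_mul, ← rpow_natCast (2 : ℝ) (b * 2),
      ← logb_le_iff_le_rpow one_lt_two (by positivity)]
    push_cast
    linarith
  rw [zpow_neg_two_mul_add_one, zpow_neg, zpow_natCast]
  rw [div_le_iff₀ (by positivity)] at h
  field_simp
  linarith

lemma one_le_ceil_half_logb {ε : ℝ} (hε : 0 < ε) (hε8 : ε ≤ π ^ 2 / 8) :
    1 ≤ ⌈(1 / 2 : ℝ) * logb 2 (π ^ 2 / (2 * ε))⌉₊ := by
  have h4 : 4 ≤ π ^ 2 / (2 * ε) := by
    rw [le_div_iff₀ (by positivity)]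
    linarith
  have := logb_le_logb_of_le (b := 2) one_lt_two (by norm_num) h4
  rw [show (4 : ℝ) = 2 ^ (2 : ℝ) by norm_num, logb_rpow two_pos one_lt_two.ne'] at this
  exact Nat.one_le_ceil_iff.2 (by linarith)

theorem randomized_rounding_of_phases :
    (∀ (θ : ℝ) (b : ℕ), 1 ≤ b →
      ((1 - rfrac θ b) * phi0 θ b +
          rfrac θ b * (phi0 θ b + (2 : ℝ) ^ (-(b : ℤ))) = θ) ∧
      ‖phase θ - expPhase θ b‖ ≤ 1 - Real.cos (Real.pi * (2 : ℝ) ^ (-(b : ℤ))) ∧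
      1 - Real.cos (Real.pi * (2 : ℝ) ^ (-(b : ℤ))) ≤
        Real.pi ^ 2 * (2 : ℝ) ^ (-(2 * (b : ℤ) + 1))) ∧
    (∀ (θ : ℝ) (ε : ℝ), 0 < ε → ε ≤ Real.pi ^ 2 / 8 →
      ‖phase θ -
          expPhase θ ⌈(1 / 2 : ℝ) * Real.logb 2 (Real.pi ^ 2 / (2 * ε))⌉₊‖ ≤ ε) := by
  refine ⟨fun θ b hb => ⟨?_, norm_phase_sub_expPhase_le θ hb, one_sub_cos_pi_mul_zpow_le b⟩,
    fun θ ε hε hε8 => ?_⟩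
  · linear_combination phi0_add_rfrac_mul θ b
  · calc _ ≤ _ := norm_phase_sub_expPhase_le θ (one_le_ceil_half_logb hε hε8)
      _ ≤ _ := one_sub_cos_pi_mul_zpow_le _
      _ ≤ ε := pi_sq_mul_zpow_le_of_logb_le hε (Nat.le_ceil _)
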